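/- Let n ≥ 1 and let S, T ⊆ {1,…,n} be nonempty proper subsets. Then the intersection F_S ∩ F_T of the corresponding facets of the permutohedron Π_{n−1} is nonempty if and only if S ⊆ T or T ⊆ S. -/

import Mathlib

/-!
At a vertex `v_σ`, the coordinates indexed by a `k`-set `S` are `k` distinct numbers among
`1, …, n`, so `∑_{i ∈ S} x_i ≥ k(k+1)/2`, with equality exactly when `σ⁻¹` maps `S` onto the
initial segment `{0, …, k-1}`. Hence `F_S` is cut out of the permutohedron by a supporting
hyperplane, and a point of `F_S ∩ F_T` forces some vertex with positive weight onto both facets;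
then `σ⁻¹` maps `S` and `T` onto initial segments, which are nested. Conversely, if `S ⊆ T`, the
permutation sorting the key `0` on `S`, `1` on `T \ S`, `2` elsewhere gives a vertex in both.
-/

/-- The vertex `v_σ` of the permutohedron: its `i`-th coordinate is `σ⁻¹(i)`
(with values in `{1, …, n}`). -/
noncomputable def permuVertex (n : ℕ) (σ : Equiv.Perm (Fin n)) : Fin n → ℝ :=
  fun i => ((σ⁻¹ i : ℕ) : ℝ) + 1

/-- The `(n-1)`-dimensional permutohedron `Π_{n-1} ⊆ ℝ^n`: the convex hull
of the `n!` points `v_σ`. -/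
noncomputable def permutohedron (n : ℕ) : Set (Fin n → ℝ) :=
  convexHull ℝ (Set.range (permuVertex n))

/-- The facet `F_S` of the permutohedron, for a nonempty proper `S ⊆ {1, …, n}` with
`|S| = k`: the points of the permutohedron where `∑_{i ∈ S} x_i = k(k+1)/2`. -/
noncomputable def facet (n : ℕ) (S : Finset (Fin n)) : Set (Fin n → ℝ) :=
  {x ∈ permutohedron n |
    ∑ i ∈ S, x i = ((S.card : ℝ) * ((S.card : ℝ) + 1)) / 2}

open Finset

lemma sum_range_card_lt_sum_of_ne {A : Finset ℕ} (hA : A ≠ range #A) :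
    ∑ i ∈ range #A, i < ∑ i ∈ A, i := by
  set R := range #A
  -- `A \ R` and `R \ A` have the same size, but the elements of the first are `≥ #A`
  -- and those of the second `< #A`.
  have hcard : #(A \ R) = #(R \ A) := card_sdiff_comm (card_range _).symm
  have hne : (R \ A).Nonempty := by
    rw [nonempty_iff_ne_empty, Ne, sdiff_eq_empty_iff_subset]
    exact fun hRA => hA (eq_of_subset_of_card_le hRA (card_range _).ge).symm
  calc ∑ i ∈ R, i = ∑ i ∈ R ∩ A, i + ∑ i ∈ R \ A, i := (sum_inter_add_sum_sdiff _ _ _).symm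
    _ < ∑ i ∈ R ∩ A, i + ∑ _i ∈ R \ A, #A :=
        Nat.add_lt_add_left
          (sum_lt_sum_of_nonempty hne fun i hi => mem_range.1 (mem_sdiff.1 hi).1) _
    _ = ∑ i ∈ A ∩ R, i + ∑ _i ∈ A \ R, #A := by rw [inter_comm, sum_const, sum_const, hcard]
    _ ≤ ∑ i ∈ A ∩ R, i + ∑ i ∈ A \ R, i := by
        gcongr with i hi
        simpa [R] using (mem_sdiff.1 hi).2
    _ = ∑ i ∈ A, i := sum_inter_add_sum_sdiff _ _ _

lemma sum_range_card_le_sum (A : Finset ℕ) : ∑ i ∈ range #A, i ≤ ∑ i ∈ A, i := by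
  rcases eq_or_ne A (range #A) with hA | hA
  · exact (congrArg (∑ i ∈ ·, i) hA).ge
  · exact (sum_range_card_lt_sum_of_ne hA).le

lemma eq_range_card_of_sum_eq {A : Finset ℕ} (h : ∑ i ∈ A, i = ∑ i ∈ range #A, i) :
    A = range #A := by
  by_contra hA
  exact (sum_range_card_lt_sum_of_ne hA).ne' h

lemma cast_sum_range_add (k : ℕ) :
    ((∑ i ∈ range k, i : ℕ) : ℝ) + k = (k : ℝ) * ((k : ℝ) + 1) / 2 := by
  induction k with
  | zero => simp
  | succ k ih =>
    rw [sum_range_succ]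
    push_cast at ih ⊢
    linarith

lemma convexHull_inter_hyperplane_subset {𝕜 E : Type*} [Field 𝕜] [LinearOrder 𝕜]
    [IsStrictOrderedRing 𝕜] [AddCommGroup E] [Module 𝕜 E] {s : Set E} {φ : E →ₗ[𝕜] 𝕜} {c : 𝕜}
    (hs : ∀ z ∈ s, c ≤ φ z) :
    convexHull 𝕜 s ∩ {x | φ x = c} ⊆ convexHull 𝕜 (s ∩ {x | φ x = c}) := by
  classical
  rintro x ⟨hx, hφx⟩
  obtain ⟨ι, _, w, z, hw₀, hw₁, hz, rfl⟩ := mem_convexHull_iff_exists_fintype.1 hx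
  have hslack : ∀ i ∈ univ, w i * (φ (z i) - c) = 0 := by
    refine (sum_eq_zero_iff_of_nonneg fun i _ => ?_).1 ?_
    · exact mul_nonneg (hw₀ i) (sub_nonneg.2 (hs _ (hz i)))
    · simp only [Set.mem_ofPred_eq, map_sum, map_smul, smul_eq_mul] at hφx
      simp only [mul_sub, sum_sub_distrib, ← sum_mul, hw₁, one_mul, hφx, sub_self]
  set t := univ.filter fun i => w i ≠ 0
  have ht : ∑ i ∈ t, w i = 1 := by rw [sum_filter_ne_zero, hw₁]
  have hcenter : t.centerMass w z = ∑ i, w i • z i := by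
    rw [centerMass_eq_of_sum_1 _ _ ht]
    exact sum_filter_of_ne fun i _ h => left_ne_zero_of_smul h
  rw [← hcenter]
  refine t.centerMass_mem_convexHull (fun i _ => hw₀ i) (ht ▸ one_pos) fun i hi => ⟨hz i, ?_⟩
  have hwi := (mem_filter.1 hi).2
  exact sub_eq_zero.1 ((mul_eq_zero.1 (hslack i (mem_univ i))).resolve_left hwi)

section Permutohedron

variable {n : ℕ}

noncomputable def coordSum (S : Finset (Fin n)) : (Fin n → ℝ) →ₗ[ℝ] ℝ :=
  ∑ i ∈ S, LinearMap.proj i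

@[simp]
lemma coordSum_apply (S : Finset (Fin n)) (x : Fin n → ℝ) : coordSum S x = ∑ i ∈ S, x i := by
  simp [coordSum]

lemma card_image_perm_inv_val (σ : Equiv.Perm (Fin n)) (U : Finset (Fin n)) :
    #(U.image fun i => (σ⁻¹ i : ℕ)) = #U :=
  card_image_of_injective _ (Fin.val_injective.comp σ⁻¹.injective)

lemma sum_permuVertex (σ : Equiv.Perm (Fin n)) (U : Finset (Fin n)) :
    ∑ i ∈ U, permuVertex n σ i = ((∑ a ∈ U.image fun i => (σ⁻¹ i : ℕ), a : ℕ) : ℝ) + #U := by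
  rw [sum_image fun i _ j _ h => σ⁻¹.injective (Fin.val_injective h)]
  simp [permuVertex, sum_add_distrib]

lemma le_sum_permuVertex (σ : Equiv.Perm (Fin n)) (U : Finset (Fin n)) :
    (#U : ℝ) * ((#U : ℝ) + 1) / 2 ≤ ∑ i ∈ U, permuVertex n σ i := by
  rw [sum_permuVertex, ← cast_sum_range_add, ← card_image_perm_inv_val σ U]
  gcongr ?_ + _
  exact_mod_cast sum_range_card_le_sum _

lemma permuVertex_mem_permutohedron (σ : Equiv.Perm (Fin n)) :
    permuVertex n σ ∈ permutohedron n :=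
  subset_convexHull ℝ _ ⟨σ, rfl⟩

lemma permuVertex_mem_facet_iff {σ : Equiv.Perm (Fin n)} {U : Finset (Fin n)} :
    permuVertex n σ ∈ facet n U ↔ U.image (fun i => (σ⁻¹ i : ℕ)) = range #U := by
  simp only [facet, Set.mem_ofPred_eq, permuVertex_mem_permutohedron, true_and, sum_permuVertex,
    ← cast_sum_range_add, ← card_image_perm_inv_val σ U, add_left_inj, Nat.cast_inj]
  refine ⟨eq_range_card_of_sum_eq, fun h => ?_⟩
  conv_lhs => rw [h]

lemma permuVertex_mem_facet_of_lt {σ : Equiv.Perm (Fin n)} {U : Finset (Fin n)}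
    (h : ∀ i ∈ U, (σ⁻¹ i : ℕ) < #U) : permuVertex n σ ∈ facet n U := by
  refine permuVertex_mem_facet_iff.2 (eq_of_subset_of_card_le ?_ ?_)
  · exact image_subset_iff.2 fun i hi => mem_range.2 (h i hi)
  · rw [card_range, card_image_perm_inv_val]

lemma exists_permuVertex_mem_facet_inter {S T : Finset (Fin n)}
    (h : (facet n S ∩ facet n T).Nonempty) :
    ∃ σ, permuVertex n σ ∈ facet n S ∩ facet n T := by
  obtain ⟨x, ⟨hx, hxS⟩, -, hxT⟩ := h
  have hV : ∀ U, ∀ z ∈ Set.range (permuVertex n),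
      (#U : ℝ) * ((#U : ℝ) + 1) / 2 ≤ coordSum U z := by
    rintro U _ ⟨σ, rfl⟩
    simpa using le_sum_permuVertex σ U
  have hxS' := convexHull_inter_hyperplane_subset (hV S) ⟨hx, by simpa using hxS⟩
  have hxST := convexHull_inter_hyperplane_subset (fun z hz => hV T z hz.1)
    ⟨hxS', by simpa using hxT⟩
  obtain ⟨_, ⟨⟨σ, rfl⟩, hσS⟩, hσT⟩ := convexHull_nonempty_iff.1 ⟨x, hxST⟩
  exact ⟨σ, ⟨permuVertex_mem_permutohedron σ, by simpa using hσS⟩,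
    ⟨permuVertex_mem_permutohedron σ, by simpa using hσT⟩⟩

lemma permuVertex_sort_mem_facet {α : Type*} [LinearOrder α] (f : Fin n → α) (c : α) :
    permuVertex n (Tuple.sort f) ∈ facet n (univ.filter fun i => f i ≤ c) := by
  set σ := Tuple.sort f
  refine permuVertex_mem_facet_of_lt fun i hi => ?_
  have hsub : (Iic (σ⁻¹ i)).map σ.toEmbedding ⊆ univ.filter fun i => f i ≤ c := by
    intro j hj
    obtain ⟨k, hk, rfl⟩ := mem_map.1 hj
    refine mem_filter.2 ⟨mem_univ _, ?_⟩
    calc f (σ k) ≤ f (σ (σ⁻¹ i)) := Tuple.monotone_sort f (mem_Iic.1 hk)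
      _ = f i := by simp
      _ ≤ c := (mem_filter.1 hi).2
  have := card_le_card hsub
  rw [card_map, Fin.card_Iic] at this
  omega

lemma facet_inter_nonempty_of_subset {S T : Finset (Fin n)} (h : S ⊆ T) :
    (facet n S ∩ facet n T).Nonempty := by
  classical
  let f : Fin n → ℕ := fun i => if i ∈ S then 0 else if i ∈ T then 1 else 2
  have hS : (univ.filter fun i => f i ≤ 0) = S := by
    ext i; have := @h i; by_cases i ∈ S <;> by_cases i ∈ T <;> simp_all [f]
  have hT : (univ.filter fun i => f i ≤ 1) = T := by
    ext i; have := @h i; by_cases i ∈ S <;> by_cases i ∈ T <;> simp_all [f]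
  exact ⟨_, hS ▸ permuVertex_sort_mem_facet f 0, hT ▸ permuVertex_sort_mem_facet f 1⟩

end Permutohedron

theorem statement6 (n : ℕ) (S T : Finset (Fin n)) :
    (facet n S ∩ facet n T).Nonempty ↔ S ⊆ T ∨ T ⊆ S := by
  refine ⟨fun h => ?_, ?_⟩
  · obtain ⟨σ, hS, hT⟩ := exists_permuVertex_mem_facet_inter h
    rw [permuVertex_mem_facet_iff] at hS hT
    have hinj : ∀ {A B : Finset (Fin n)}, A.image (fun i => (σ⁻¹ i : ℕ)) ⊆
        B.image (fun i => (σ⁻¹ i : ℕ)) ↔ A ⊆ B :=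
      image_subset_image_iff (Fin.val_injective.comp σ⁻¹.injective)
    rcases le_total #S #T with hcard | hcard
    · exact .inl (hinj.1 (hS ▸ hT ▸ range_subset_range.2 hcard))
    · exact .inr (hinj.1 (hS ▸ hT ▸ range_subset_range.2 hcard))
  · rintro (h | h)
    · exact facet_inter_nonempty_of_subset h
    · exact Set.inter_comm (facet n T) _ ▸ facet_inter_nonempty_of_subset h
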